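/- Let 𝕋 = {z ∈ ℂ : |z| = 1} with normalized Haar probability measure μ. Let φ ∈ L²(ℝ) be a measurable function satisfying ∑_{k ∈ ℤ} |φ(x + k)|² = 1 for almost every x ∈ ℝ, and for n ∈ ℕ define R_n : L²(𝕋, μ) → L²(ℝ) by (R_n ξ)(x) = 2^{−n/2} ξ(e^{2πi·2^{−n} x}) φ(2^{−n} x). Then: (1) each R_n is a well-defined linear isometry; and (2) if in addition m₁ : 𝕋 → ℂ is a bounded measurable function with |m₁(z)|² + |m₁(−z)|² = 2 a.e. and φ(2x) = 2^{−1/2} m₁(e^{2πix}) φ(x) for almost every x ∈ ℝ, then R_{n+1} ∘ S₁ = R_n for all n ∈ ℕ, where (S₁ξ)(z) = m₁(z)·ξ(z²). -/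

import Mathlib

open MeasureTheory

/-- The normalized Haar (arc-length) probability measure on the unit circle,
realized as a measure on `ℂ`. -/
noncomputable def haarCircle : Measure ℂ :=
  Measure.map (fun t : ℝ => Complex.exp (2 * Real.pi * Complex.I * t))
    (volume.restrict (Set.Ioc (0 : ℝ) 1))

/-!
Write `e(y) = exp(2πiy)`. Substituting `y = 2⁻ⁿx` turns `‖R_n ξ‖²` into
`∫ |ξ(e(y))|² |φ(y)|² dy`; cutting `ℝ` into the integer translates of `(0, 1]` and using the
`1`-periodicity of `e`, this is `∫_(0,1] |ξ(e(y))|² ∑ₖ |φ(y + k)|² dy = ∫ |ξ|² dμ`. The same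
periodization shows that `e` is non-singular from Lebesgue measure to `μ`, so a.e. identities on
`𝕋` pull back to `ℝ`. Then `R_{n+1} S₁ = R_n` is, at `y = 2^{-(n+1)}x`, the refinement equation
`φ(2y) = 2^{-1/2} m₁(e(y)) φ(y)` combined with `e(y)² = e(2y)`.
-/

open Set Filter
open scoped ENNReal

noncomputable def circleExp (t : ℝ) : ℂ := Complex.exp (2 * Real.pi * Complex.I * t)

@[fun_prop]
lemma measurable_circleExp : Measurable circleExp := by
  unfold circleExp; fun_prop

lemma circleExp_add_intCast (x : ℝ) (k : ℤ) : circleExp (x + k) = circleExp x := by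
  have : 2 * (Real.pi : ℂ) * Complex.I * k = k * (2 * Real.pi * Complex.I) := by ring
  rw [circleExp, Complex.ofReal_add, mul_add, Complex.exp_add, Complex.ofReal_intCast, this,
    Complex.exp_int_mul_two_pi_mul_I, mul_one, circleExp]

lemma circleExp_sq (t : ℝ) : circleExp t ^ 2 = circleExp (2 * t) := by
  rw [circleExp, circleExp, sq, ← Complex.exp_add]
  push_cast
  ring_nf

lemma haarCircle_eq_map_circleExp :
    haarCircle = (volume.restrict (Ioc (0 : ℝ) 1)).map circleExp := rfl

lemma lintegral_eq_tsum_lintegral_Ioc (f : ℝ → ℝ≥0∞) :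
    ∫⁻ x, f x = ∑' k : ℤ, ∫⁻ x in Ioc (0 : ℝ) 1, f (x + k) := by
  rw [(isAddFundamentalDomain_Ioc one_pos 0 volume).lintegral_eq_tsum'' f, zero_add]
  convert tsum_range (fun t : ℝ => ∫⁻ x in Ioc (0 : ℝ) 1, f (t + x))
    (g := fun k : ℤ => k • (1 : ℝ)) (fun a b h => by simpa using h) using 1
  · rfl
  · simp [add_comm]

lemma lintegral_comp_circleExp_mul {f : ℂ → ℝ≥0∞} (hf : Measurable f) {g : ℝ → ℝ≥0∞}
    (hg : Measurable g) :
    ∫⁻ x, f (circleExp x) * g x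
      = ∫⁻ x in Ioc (0 : ℝ) 1, f (circleExp x) * ∑' k : ℤ, g (x + k) := by
  simp_rw [lintegral_eq_tsum_lintegral_Ioc, circleExp_add_intCast, ← ENNReal.tsum_mul_left]
  rw [lintegral_tsum fun k => by fun_prop]

lemma quasiMeasurePreserving_circleExp :
    Measure.QuasiMeasurePreserving circleExp volume haarCircle := by
  refine ⟨measurable_circleExp, .mk fun N hN hN0 => ?_⟩
  have hae : ∀ᵐ x ∂volume.restrict (Ioc (0 : ℝ) 1), circleExp x ∉ N := by
    rw [haarCircle_eq_map_circleExp, Measure.map_apply measurable_circleExp hN] at hN0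
    exact measure_eq_zero_iff_ae_notMem.mp hN0
  have hind := lintegral_comp_circleExp_mul (measurable_one.indicator hN) measurable_one
  simp only [Pi.one_apply, mul_one] at hind
  rw [Measure.map_apply measurable_circleExp hN,
    ← lintegral_indicator_one (measurable_circleExp hN)]
  change ∫⁻ x, N.indicator 1 (circleExp x) = 0
  rw [hind]
  refine (lintegral_congr_ae ?_).trans lintegral_zero
  filter_upwards [hae] with x hx
  simp [indicator_of_notMem hx]

lemma lintegral_comp_circleExp_mul_of_tsum_eq_one {f : ℂ → ℝ≥0∞} (hf : Measurable f)
    {g : ℝ → ℝ≥0∞} (hg : Measurable g) (hsum : ∀ᵐ x, ∑' k : ℤ, g (x + k) = 1) :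
    ∫⁻ x, f (circleExp x) * g x = ∫⁻ z, f z ∂haarCircle := by
  rw [lintegral_comp_circleExp_mul hf hg, haarCircle_eq_map_circleExp,
    lintegral_map hf measurable_circleExp]
  refine lintegral_congr_ae ?_
  filter_upwards [ae_restrict_of_ae hsum] with x hx
  rw [hx, mul_one]

lemma lintegral_comp_div (g : ℝ → ℝ≥0∞) {a : ℝ} (ha : a ≠ 0) :
    ∫⁻ x, g (x / a) = ENNReal.ofReal |a| * ∫⁻ x, g x := by
  have := lintegral_map_equiv g (MeasurableEquiv.mulLeft₀ a⁻¹ (inv_ne_zero ha)) (μ := volume)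
  simp only [MeasurableEquiv.coe_mulLeft₀, Real.map_volume_mul_left (inv_ne_zero ha), inv_inv,
    lintegral_smul_measure] at this
  simp_rw [div_eq_inv_mul, ← this, smul_eq_mul]

lemma quasiMeasurePreserving_div_const {a : ℝ} (ha : a ≠ 0) :
    Measure.QuasiMeasurePreserving (fun x : ℝ => x / a) volume volume := by
  simp_rw [div_eq_inv_mul]
  exact Measure.quasiMeasurePreserving_smul volume (inv_ne_zero ha)

lemma tsum_enorm_sq_eq_one {ι E : Type*} [NormedAddCommGroup E] {u : ι → E}
    (h : ∑' i, ‖u i‖ ^ 2 = 1) : ∑' i, ‖u i‖ₑ ^ 2 = 1 := by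
  have hs : Summable fun i => ‖u i‖ ^ 2 := by
    by_contra hc
    rw [tsum_eq_zero_of_not_summable hc] at h
    exact zero_ne_one h
  simp_rw [← ofReal_norm, ← ENNReal.ofReal_pow (norm_nonneg _)]
  rw [← ENNReal.ofReal_tsum_of_nonneg (fun i => by positivity) hs, h, ENNReal.ofReal_one]

-- The paper's `R_n f`, as a function on `ℝ` before passing to `L²`.
noncomputable def scaleEmbed (φ : ℝ → ℂ) (n : ℕ) (f : ℂ → ℂ) (x : ℝ) : ℂ :=
  (((2 : ℝ) ^ (-(n : ℝ) / 2) : ℝ) : ℂ) * f (circleExp (x / 2 ^ n)) * φ (x / 2 ^ n)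

lemma enorm_two_rpow_neg_half_sq_mul_two_pow (n : ℕ) :
    ‖(((2 : ℝ) ^ (-(n : ℝ) / 2) : ℝ) : ℂ)‖ₑ ^ 2 * 2 ^ n = 1 := by
  have hsq : ((2 : ℝ) ^ (-(n : ℝ) / 2)) ^ 2 = ((2 : ℝ) ^ n)⁻¹ := by
    rw [← Real.rpow_mul_natCast zero_le_two, show -(n : ℝ) / 2 * (2 : ℕ) = -n by push_cast; ring,
      Real.rpow_neg zero_le_two, Real.rpow_natCast]
  rw [← ofReal_norm, Complex.norm_real, Real.norm_of_nonneg (by positivity),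
    ← ENNReal.ofReal_pow (by positivity), hsq, ENNReal.ofReal_inv_of_pos (by positivity),
    ENNReal.ofReal_pow zero_le_two, ENNReal.ofReal_ofNat,
    ENNReal.inv_mul_cancel (by simp) (by simp)]

lemma two_rpow_neg_succ_half (n : ℕ) :
    (2 : ℝ) ^ (-((n + 1 : ℕ) : ℝ) / 2) = (2 : ℝ) ^ (-(n : ℝ) / 2) * (Real.sqrt 2)⁻¹ := by
  rw [Real.sqrt_eq_rpow, ← Real.rpow_neg zero_le_two, ← Real.rpow_add two_pos]
  congr 1
  push_cast
  ring

lemma scaleEmbed_congr_ae {φ : ℝ → ℂ} (n : ℕ) {f g : ℂ → ℂ} (h : f =ᵐ[haarCircle] g) :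
    scaleEmbed φ n f =ᵐ[volume] scaleEmbed φ n g := by
  filter_upwards [(quasiMeasurePreserving_circleExp.comp
    (quasiMeasurePreserving_div_const (by positivity : (2 : ℝ) ^ n ≠ 0))).ae h] with x hx
  simp only [scaleEmbed, Function.comp_apply] at hx ⊢
  rw [hx]

lemma scaleEmbed_succ_eq {φ : ℝ → ℂ} {m f g : ℂ → ℂ} (n : ℕ) (x : ℝ)
    (hg : g (circleExp (x / 2 ^ (n + 1))) =
      m (circleExp (x / 2 ^ (n + 1))) * f (circleExp (x / 2 ^ (n + 1)) ^ 2))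
    (hrefine : φ (2 * (x / 2 ^ (n + 1))) =
      (Real.sqrt 2 : ℂ)⁻¹ * m (circleExp (x / 2 ^ (n + 1))) * φ (x / 2 ^ (n + 1))) :
    scaleEmbed φ (n + 1) g x = scaleEmbed φ n f x := by
  have hx : 2 * (x / 2 ^ (n + 1)) = x / 2 ^ n := by
    rw [pow_succ]
    field_simp
  rw [scaleEmbed, scaleEmbed, hg, circleExp_sq, hx, ← hx, hrefine, two_rpow_neg_succ_half]
  push_cast
  ring

section
variable {φ : ℝ → ℂ} (hφ : Measurable φ) (hsum : ∀ᵐ x, ∑' k : ℤ, ‖φ (x + k)‖ₑ ^ 2 = 1)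
include hφ hsum

lemma lintegral_enorm_scaleEmbed_sq (n : ℕ) {f : ℂ → ℂ} (hf : Measurable f) :
    ∫⁻ x, ‖scaleEmbed φ n f x‖ₑ ^ 2 = ∫⁻ z, ‖f z‖ₑ ^ 2 ∂haarCircle := by
  have hpt : ∀ x, ‖scaleEmbed φ n f x‖ₑ ^ 2 = ‖(((2 : ℝ) ^ (-(n : ℝ) / 2) : ℝ) : ℂ)‖ₑ ^ 2 *
      (‖f (circleExp (x / 2 ^ n))‖ₑ ^ 2 * ‖φ (x / 2 ^ n)‖ₑ ^ 2) := fun x => by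
    simp only [scaleEmbed, enorm_mul]
    ring
  simp_rw [hpt]
  rw [lintegral_const_mul _ (by fun_prop),
    lintegral_comp_div (fun y => ‖f (circleExp y)‖ₑ ^ 2 * ‖φ y‖ₑ ^ 2) (by positivity),
    lintegral_comp_circleExp_mul_of_tsum_eq_one (f := fun z => ‖f z‖ₑ ^ 2)
      (g := fun y => ‖φ y‖ₑ ^ 2) (by fun_prop) (by fun_prop) hsum,
    abs_of_pos (by positivity), ENNReal.ofReal_pow zero_le_two, ENNReal.ofReal_ofNat, ← mul_assoc,
    enorm_two_rpow_neg_half_sq_mul_two_pow, one_mul]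

lemma eLpNorm_scaleEmbed (n : ℕ) {f : ℂ → ℂ} (hf : Measurable f) :
    eLpNorm (scaleEmbed φ n f) 2 volume = eLpNorm f 2 haarCircle := by
  simp only [eLpNorm_eq_lintegral_rpow_enorm_toReal two_ne_zero ENNReal.ofNat_ne_top,
    ENNReal.toReal_ofNat, ENNReal.rpow_two, lintegral_enorm_scaleEmbed_sq hφ hsum n hf]

lemma memLp_scaleEmbed (n : ℕ) (ξ : Lp ℂ 2 haarCircle) :
    MemLp (scaleEmbed φ n ξ) 2 volume := by
  have hξ : Measurable ξ := (Lp.stronglyMeasurable ξ).measurable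
  have hmeas : Measurable (scaleEmbed φ n ξ) := by unfold scaleEmbed; fun_prop
  refine ⟨hmeas.aestronglyMeasurable, ?_⟩
  rw [eLpNorm_scaleEmbed hφ hsum n hξ]
  exact Lp.eLpNorm_lt_top ξ

noncomputable def scaleEmbedLp (n : ℕ) : Lp ℂ 2 haarCircle →ₗ[ℂ] Lp ℂ 2 (volume : Measure ℝ) where
  toFun ξ := (memLp_scaleEmbed hφ hsum n ξ).toLp
  map_add' ξ η := by
    rw [← MemLp.toLp_add]
    refine MemLp.toLp_congr (memLp_scaleEmbed hφ hsum n _) _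
      ((scaleEmbed_congr_ae n (Lp.coeFn_add ξ η)).trans ?_)
    exact .of_eq (by ext x; simp only [scaleEmbed, Pi.add_apply]; ring)
  map_smul' c ξ := by
    rw [RingHom.id_apply, ← MemLp.toLp_const_smul]
    refine MemLp.toLp_congr (memLp_scaleEmbed hφ hsum n _) _
      ((scaleEmbed_congr_ae n (Lp.coeFn_smul c ξ)).trans ?_)
    exact .of_eq (by ext x; simp only [scaleEmbed, Pi.smul_apply, smul_eq_mul]; ring)

lemma coeFn_scaleEmbedLp (n : ℕ) (ξ : Lp ℂ 2 haarCircle) :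
    scaleEmbedLp hφ hsum n ξ =ᵐ[volume] scaleEmbed φ n ξ :=
  MemLp.coeFn_toLp (memLp_scaleEmbed hφ hsum n ξ)

lemma norm_scaleEmbedLp (n : ℕ) (ξ : Lp ℂ 2 haarCircle) : ‖scaleEmbedLp hφ hsum n ξ‖ = ‖ξ‖ := by
  rw [scaleEmbedLp, LinearMap.coe_mk, AddHom.coe_mk, Lp.norm_toLp,
    eLpNorm_scaleEmbed hφ hsum n (Lp.stronglyMeasurable ξ).measurable, Lp.norm_def]

lemma scaleEmbedLp_succ_comp {m : ℂ → ℂ}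
    (hrefine : ∀ᵐ x, φ (2 * x) = (Real.sqrt 2 : ℂ)⁻¹ * m (circleExp x) * φ x)
    (S : Lp ℂ 2 haarCircle →ₗ[ℂ] Lp ℂ 2 haarCircle)
    (hS : ∀ ξ : Lp ℂ 2 haarCircle, S ξ =ᵐ[haarCircle] fun z => m z * ξ (z ^ 2)) (n : ℕ) :
    (scaleEmbedLp hφ hsum (n + 1)).comp S = scaleEmbedLp hφ hsum n := by
  have hdiv := quasiMeasurePreserving_div_const (by positivity : (2 : ℝ) ^ (n + 1) ≠ 0)
  refine LinearMap.ext fun ξ => Lp.ext ?_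
  filter_upwards [coeFn_scaleEmbedLp hφ hsum (n + 1) (S ξ), coeFn_scaleEmbedLp hφ hsum n ξ,
    (quasiMeasurePreserving_circleExp.comp hdiv).ae (hS ξ), hdiv.ae hrefine]
    with x hRSξ hRξ hSξ hφx
  rw [LinearMap.comp_apply, hRSξ, hRξ]
  exact scaleEmbed_succ_eq n x hSξ hφx

end

theorem stmt12_general (φ : ℝ → ℂ) (hφmeas : Measurable φ)
    (hφsum : ∀ᵐ x : ℝ ∂volume, ∑' k : ℤ, ‖φ (x + k)‖ ^ 2 = 1) :
    ∃ R : ℕ → (Lp ℂ 2 haarCircle →ₗ[ℂ] Lp ℂ 2 (volume : Measure ℝ)),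
      (∀ (n : ℕ) (ξ : Lp ℂ 2 haarCircle),
        ⇑(R n ξ) =ᵐ[volume] fun x : ℝ =>
          (((2 : ℝ) ^ (-(n : ℝ) / 2) : ℝ) : ℂ) *
            ξ (Complex.exp (2 * Real.pi * Complex.I * ((x / 2 ^ n : ℝ) : ℂ))) *
            φ (x / 2 ^ n)) ∧
      (∀ (n : ℕ) (ξ : Lp ℂ 2 haarCircle), ‖R n ξ‖ = ‖ξ‖) ∧
      (∀ (m₁ : ℂ → ℂ), Measurable m₁ →
        (∃ C : ℝ, ∀ᵐ z ∂haarCircle, ‖m₁ z‖ ≤ C) →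
        (∀ᵐ z ∂haarCircle,
          ‖m₁ z‖ ^ 2 + ‖m₁ (-z)‖ ^ 2 = 2) →
        (∀ᵐ x : ℝ ∂volume, φ (2 * x) =
          (Real.sqrt 2 : ℂ)⁻¹ *
            m₁ (Complex.exp (2 * Real.pi * Complex.I * (x : ℂ))) * φ x) →
        ∀ S₁ : Lp ℂ 2 haarCircle →ₗ[ℂ] Lp ℂ 2 haarCircle,
          (∀ ξ : Lp ℂ 2 haarCircle,
            ⇑(S₁ ξ) =ᵐ[haarCircle] fun z => m₁ z * ξ (z ^ 2)) →
          ∀ n : ℕ, (R (n + 1)).comp S₁ = R n) := by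
  have hsum : ∀ᵐ x : ℝ, ∑' k : ℤ, ‖φ (x + k)‖ₑ ^ 2 = 1 := by
    filter_upwards [hφsum] with x hx using tsum_enorm_sq_eq_one hx
  refine ⟨scaleEmbedLp hφmeas hsum, coeFn_scaleEmbedLp hφmeas hsum,
    norm_scaleEmbedLp hφmeas hsum, ?_⟩
  intro m₁ _ _ _ hrefine S₁ hS₁ n
  exact scaleEmbedLp_succ_comp hφmeas hsum hrefine S₁ hS₁ n

/-- If `φ ∈ L²(ℝ)` satisfies `∑_{k∈ℤ} |φ(x+k)|² = 1` a.e., then the maps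
`(R_n ξ)(x) = 2^{−n/2} ξ(e^{2πi 2^{−n} x}) φ(2^{−n} x)` are well-defined linear
isometries `L²(𝕋, μ) → L²(ℝ)`, and if moreover `|m₁(z)|² + |m₁(−z)|² = 2` a.e. and
`φ(2x) = 2^{−1/2} m₁(e^{2πix}) φ(x)` a.e., then `R_{n+1} ∘ S₁ = R_n` where
`(S₁ ξ)(z) = m₁(z) ξ(z²)`. -/
theorem stmt12 (φ : ℝ → ℂ) (hφmeas : Measurable φ)
    (hφ2 : MemLp φ 2 (volume : Measure ℝ))
    (hφsum : ∀ᵐ x : ℝ ∂volume, ∑' k : ℤ, ‖φ (x + k)‖ ^ 2 = 1) :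
    ∃ R : ℕ → (Lp ℂ 2 haarCircle →ₗ[ℂ] Lp ℂ 2 (volume : Measure ℝ)),
      (∀ (n : ℕ) (ξ : Lp ℂ 2 haarCircle),
        ⇑(R n ξ) =ᵐ[volume] fun x : ℝ =>
          (((2 : ℝ) ^ (-(n : ℝ) / 2) : ℝ) : ℂ) *
            ξ (Complex.exp (2 * Real.pi * Complex.I * ((x / 2 ^ n : ℝ) : ℂ))) *
            φ (x / 2 ^ n)) ∧
      (∀ (n : ℕ) (ξ : Lp ℂ 2 haarCircle), ‖R n ξ‖ = ‖ξ‖) ∧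
      (∀ (m₁ : ℂ → ℂ), Measurable m₁ →
        (∃ C : ℝ, ∀ᵐ z ∂haarCircle, ‖m₁ z‖ ≤ C) →
        (∀ᵐ z ∂haarCircle,
          ‖m₁ z‖ ^ 2 + ‖m₁ (-z)‖ ^ 2 = 2) →
        (∀ᵐ x : ℝ ∂volume, φ (2 * x) =
          (Real.sqrt 2 : ℂ)⁻¹ *
            m₁ (Complex.exp (2 * Real.pi * Complex.I * (x : ℂ))) * φ x) →
        ∀ S₁ : Lp ℂ 2 haarCircle →ₗ[ℂ] Lp ℂ 2 haarCircle,
          (∀ ξ : Lp ℂ 2 haarCircle,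
            ⇑(S₁ ξ) =ᵐ[haarCircle] fun z => m₁ z * ξ (z ^ 2)) →
          ∀ n : ℕ, (R (n + 1)).comp S₁ = R n) :=
  stmt12_general φ hφmeas hφsum
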